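/- Let t_1, …, t_n ∈ [−1,1] be pairwise distinct quadrature nodes, w_1, …, w_n ∈ ℝ weights, and g : ℝ → ℝ continuous. Fix an index k₀ with w_{k₀} ≠ 0 and g(t_{k₀}) ≠ 0. Then the absolute quadrature error s ↦ | ∫_{−1}^{1} log|t − s| g(t) dt − Σ_{k=1}^{n} w_k log|t_k − s| g(t_k) | tends to +∞ as s → t_{k₀} with s ≠ t_{k₀}. -/

import Mathlib

/-!
Split the quadrature sum into the term of the node `c = t k₀` and the rest. The term
`w k₀ g(c) log|c - s|` is unbounded as `s → c`, while everything else stays bounded: the other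
nodes are away from `c`, and with `|g| ≤ M` the integral is dominated by
`M |∫ |log|τ - s|| dτ|`, which is continuous in `s` because it is a difference of two primitives
of the locally integrable function `|log|u||`.
-/

open Real Filter MeasureTheory intervalIntegral Topology

lemma tendsto_abs_add_atTop_of_isBoundedUnder {α : Type*} {l : Filter α} {f g : α → ℝ}
    (hf : Tendsto (fun x => |f x|) l atTop) (hg : IsBoundedUnder (· ≤ ·) l fun x => |g x|) :
    Tendsto (fun x => |f x + g x|) l atTop := by
  obtain ⟨C, hC⟩ := hg
  refine tendsto_atTop_mono' l ?_ (tendsto_atTop_add_const_right l (-C) hf)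
  filter_upwards [eventually_map.mp hC] with x hx
  have htri := abs_sub (f x + g x) (g x)
  rw [add_sub_cancel_right] at htri
  linarith

lemma intervalIntegrable_log_abs_sub (s a b : ℝ) :
    IntervalIntegrable (fun τ => log |τ - s|) volume a b := by
  simpa only [log_abs, sub_add_cancel] using
    (intervalIntegrable_log' (a := a - s) (b := b - s)).comp_sub_right s

lemma continuous_integral_abs_log_abs_sub (a b : ℝ) :
    Continuous fun s => ∫ τ in a..b, |(log |τ - s|)| := by
  have hint : ∀ a b : ℝ, IntervalIntegrable (fun u => |(log |u|)|) volume a b := fun a b => by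
    simpa using (intervalIntegrable_log_abs_sub 0 a b).abs
  have hshift : (fun s => ∫ τ in a..b, |(log |τ - s|)|) =
      fun s => (∫ u in 0..b - s, |(log |u|)|) - ∫ u in 0..a - s, |(log |u|)| := by
    funext s
    rw [integral_comp_sub_right (fun u => |(log |u|)|),
      integral_interval_sub_left (hint _ _) (hint _ _)]
  have hprim := continuous_primitive hint 0
  rw [hshift]
  exact (hprim.comp (continuous_const.sub continuous_id)).sub
    (hprim.comp (continuous_const.sub continuous_id))

lemma abs_integral_log_abs_sub_mul_le {a b M : ℝ} {g : ℝ → ℝ}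
    (hM : ∀ τ ∈ Set.uIcc a b, |g τ| ≤ M) (s : ℝ) :
    |∫ τ in a..b, log |τ - s| * g τ| ≤ |∫ τ in a..b, |(log |τ - s|)| * M| := by
  have hle : ∀ᵐ τ ∂volume.restrict (Set.uIoc a b),
      ‖log |τ - s| * g τ‖ ≤ |(log |τ - s|)| * M := by
    refine (ae_restrict_mem measurableSet_uIoc).mono fun τ hτ => ?_
    rw [Real.norm_eq_abs, abs_mul]
    exact mul_le_mul_of_nonneg_left (hM τ (Set.uIoc_subset_uIcc hτ)) (abs_nonneg _)
  exact norm_integral_le_abs_of_norm_le hle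
    ((intervalIntegrable_log_abs_sub s a b).abs.mul_const M)

lemma isBoundedUnder_abs_integral_log_abs_sub_mul {a b : ℝ} {g : ℝ → ℝ}
    (hg : ContinuousOn g (Set.uIcc a b)) (c : ℝ) :
    IsBoundedUnder (· ≤ ·) (𝓝 c) fun s => |∫ τ in a..b, log |τ - s| * g τ| := by
  obtain ⟨M, hM⟩ := isCompact_uIcc.exists_bound_of_continuousOn hg
  have hdom : Continuous fun s => |∫ τ in a..b, |(log |τ - s|)| * M| := by
    simp_rw [intervalIntegral.integral_mul_const]
    exact ((continuous_integral_abs_log_abs_sub a b).mul continuous_const).abs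
  exact (hdom.tendsto c).isBoundedUnder_le.mono_le
    (.of_forall (abs_integral_log_abs_sub_mul_le hM))

lemma tendsto_abs_log_abs_sub_nhdsNE (c : ℝ) :
    Tendsto (fun s => |(log |c - s|)|) (𝓝[≠] c) atTop := by
  have hsub : Tendsto (fun s => c - s) (𝓝[≠] c) (𝓝[≠] 0) := by
    refine tendsto_nhdsWithin_of_tendsto_nhds_of_eventually_within _ ?_ ?_
    · simpa using ((tendsto_const_nhds (x := c)).sub (tendsto_id (x := 𝓝 c))).mono_left
        nhdsWithin_le_nhds
    · filter_upwards [self_mem_nhdsWithin] with s hs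
      exact sub_ne_zero.mpr (Ne.symm hs)
  simpa only [log_abs, Function.comp_def] using
    tendsto_abs_atBot_atTop.comp (tendsto_log_nhdsNE_zero.comp hsub)

theorem quadrature_error_blowup_at_node_general
    (n : ℕ) (t : Fin n → ℝ)
    (htinj : Function.Injective t) (w : Fin n → ℝ)
    (g : ℝ → ℝ) (hg : Continuous g)
    (k₀ : Fin n) (hw : w k₀ ≠ 0) (hgk : g (t k₀) ≠ 0) :
    Tendsto
      (fun s : ℝ =>
        |(∫ τ in (-1:ℝ)..1, Real.log |τ - s| * g τ)
          - ∑ k : Fin n, w k * (Real.log |t k - s| * g (t k))|)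
      (nhdsWithin (t k₀) {t k₀}ᶜ) atTop := by
  set I := fun s : ℝ => ∫ τ in (-1:ℝ)..1, log |τ - s| * g τ
  set F := fun s : ℝ => ∑ k ∈ Finset.univ.erase k₀, w k * (log |t k - s| * g (t k))
  have hsing :
      Tendsto (fun s => |(-(w k₀ * g (t k₀)) * log |t k₀ - s|)|) (𝓝[≠] t k₀) atTop := by
    simp_rw [abs_mul]
    exact (tendsto_abs_log_abs_sub_nhdsNE (t k₀)).const_mul_atTop
      (abs_pos.mpr (neg_ne_zero.mpr (mul_ne_zero hw hgk)))
  have hF : ContinuousAt F (t k₀) := by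
    refine tendsto_finsetSum _ fun k hk => ContinuousAt.tendsto ?_
    have hne : |t k - t k₀| ≠ 0 :=
      abs_ne_zero.mpr (sub_ne_zero.mpr (htinj.ne (Finset.ne_of_mem_erase hk)))
    fun_prop (disch := exact hne)
  have hreg : IsBoundedUnder (· ≤ ·) (𝓝[≠] t k₀) fun s => |I s - F s| := by
    have hbdd := isBoundedUnder_le_add
      (isBoundedUnder_abs_integral_log_abs_sub_mul (a := -1) (b := 1) hg.continuousOn (t k₀))
      hF.tendsto.abs.isBoundedUnder_le
    exact (hbdd.mono_le (.of_forall fun s => abs_sub _ _)).mono nhdsWithin_le_nhds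
  refine (tendsto_abs_add_atTop_of_isBoundedUnder hsing hreg).congr fun s => ?_
  rw [← Finset.add_sum_erase _ _ (Finset.mem_univ k₀)]
  congr 1
  ring

/-- The quadrature error of the logarithmic kernel blows up as the source
parameter approaches a quadrature node `t k₀` whose weight and density value
are nonzero: the absolute error tends to `+∞` as `s → t k₀`, `s ≠ t k₀`. -/
theorem quadrature_error_blowup_at_node
    (n : ℕ) (t : Fin n → ℝ) (ht : ∀ k, t k ∈ Set.Icc (-1:ℝ) 1)
    (htinj : Function.Injective t) (w : Fin n → ℝ)
    (g : ℝ → ℝ) (hg : Continuous g)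
    (k₀ : Fin n) (hw : w k₀ ≠ 0) (hgk : g (t k₀) ≠ 0) :
    Tendsto
      (fun s : ℝ =>
        |(∫ τ in (-1:ℝ)..1, Real.log |τ - s| * g τ)
          - ∑ k : Fin n, w k * (Real.log |t k - s| * g (t k))|)
      (nhdsWithin (t k₀) {t k₀}ᶜ) atTop :=
  quadrature_error_blowup_at_node_general n t htinj w g hg k₀ hw hgk
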